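/- For every ρ ∈ (0, 1/3) with 1/ρ − ⌊1/ρ⌋ > 1/2 there exists ε(ρ) > 0 such that for every N₀ ∈ ℕ there exists a connected graph G of order n ≥ N₀ with h_ρ(G) > (1 + ε)ρn. -/

import Mathlib

/-!
Take `k` copies of the gadget `H` on `2m + 1` vertices, `m = ⌊1/ρ⌋`, and join all their apexes
to one hub. Every non-hub vertex has degree at least `m + 1 > 1/ρ`, so it needs two infected
neighbours to become infected. If a contagious set met some copy in at most one vertex `x₀`, the
rest of that copy (without the apex as well, unless `x₀` lies in the clique) would be a nonempty
set each of whose vertices has at most one neighbour outside it, and the infection can never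
enter such a set. Hence `h_ρ ≥ 2k`, whereas `ρ n = ρ (k (2m + 1) + 1) = (2 - δ) k + ρ` with
`δ = 2 - ρ (2m + 1)`, which is positive exactly because `1/ρ - m > 1/2`.
-/

open Finset
open scoped Classical

variable {V : Type*}

/-- One step of the bootstrap percolation process in `G` with thresholds `φ`. -/
noncomputable def percStep [Fintype V] (G : SimpleGraph V) (φ : V → ℝ) (A : Finset V) :
    Finset V :=
  A ∪ Finset.univ.filter fun v => φ v ≤ ((A.filter fun u => G.Adj v u).card : ℝ)

/-- `A` is a contagious set for `G` with respect to thresholds `φ`. -/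
def Contagious [Fintype V] (G : SimpleGraph V) (φ : V → ℝ) (A : Finset V) : Prop :=
  ∃ k, (percStep G φ)^[k] A = Finset.univ

/-- The final infected set `H_{φ,G}(A)`. -/
noncomputable def percClosure [Fintype V] (G : SimpleGraph V) (φ : V → ℝ) (A : Finset V) :
    Finset V :=
  (percStep G φ)^[Fintype.card V] A

/-- `h_ρ(G)`: minimum size of a contagious set for ratio `ρ`. -/
noncomputable def minContagious [Fintype V] (G : SimpleGraph V) (ρ : ℝ) : ℕ :=
  sInf {k | ∃ A : Finset V, A.card = k ∧ Contagious G (fun v => ρ * (G.degree v : ℝ)) A}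

section Percolation

variable [Fintype V] {G : SimpleGraph V} {φ : V → ℝ}

lemma percStep_mono : Monotone (percStep G φ) := by
  intro A B hAB
  refine Finset.union_subset_union hAB (Finset.monotone_filter_right _ fun v _ hv => ?_)
  exact hv.trans (by exact_mod_cast Finset.card_le_card (Finset.filter_subset_filter _ hAB))

def IsImmune (G : SimpleGraph V) (φ : V → ℝ) (U : Finset V) : Prop :=
  ∀ v ∈ U, (((Uᶜ).filter fun u => G.Adj v u).card : ℝ) < φ v

lemma IsImmune.percStep_compl_subset {U : Finset V} (hU : IsImmune G φ U) :
    percStep G φ Uᶜ ⊆ Uᶜ := by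
  intro v hv
  simp only [percStep, Finset.mem_union, Finset.mem_filter, Finset.mem_univ, true_and] at hv
  rcases hv with hv | hv
  · exact hv
  · exact Finset.mem_compl.2 fun hvU => (hU v hvU).not_ge hv

lemma Contagious.exists_mem_of_isImmune {S U : Finset V} (hS : Contagious G φ S)
    (hU : IsImmune G φ U) (hne : U.Nonempty) : ∃ v ∈ U, v ∈ S := by
  by_contra! hSU
  have hstays : ∀ j, (percStep G φ)^[j] S ⊆ Uᶜ := by
    intro j
    induction j with
    | zero => exact fun v hv => Finset.mem_compl.2 fun hvU => hSU v hvU hv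
    | succ j ih =>
      rw [Function.iterate_succ_apply']
      exact (percStep_mono ih).trans hU.percStep_compl_subset
  obtain ⟨j, hj⟩ := hS
  obtain ⟨v, hv⟩ := hne
  exact Finset.mem_compl.1 (hstays j (hj ▸ Finset.mem_univ v)) hv

lemma isImmune_of_outside_neighbor_unique {U : Finset V} (hφ : ∀ v ∈ U, 1 < φ v)
    (hout : ∀ v ∈ U, ∃ w, ∀ u, G.Adj v u → u ∉ U → u = w) : IsImmune G φ U := by
  intro v hv
  obtain ⟨w, hw⟩ := hout v hv
  have hsub : ((Uᶜ).filter fun u => G.Adj v u) ⊆ {w} := fun u hu => by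
    simp only [Finset.mem_filter, Finset.mem_compl] at hu
    exact Finset.mem_singleton.2 (hw u hu.2 hu.1)
  have hcard : (((Uᶜ).filter fun u => G.Adj v u).card : ℝ) ≤ 1 := by
    exact_mod_cast (Finset.card_le_card hsub).trans (Finset.card_singleton w).le
  exact hcard.trans_lt (hφ v hv)

lemma le_minContagious {ρ : ℝ} {b : ℕ}
    (h : ∀ S, Contagious G (fun v => ρ * (G.degree v : ℝ)) S → b ≤ S.card) :
    b ≤ minContagious G ρ :=
  le_csInf ⟨_, Finset.univ, rfl, 0, rfl⟩ fun _ ⟨S, hS, hc⟩ => hS ▸ h S hc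

end Percolation

section Iso

variable {W : Type*} [Fintype V] [Fintype W] {G : SimpleGraph V} {G' : SimpleGraph W}

lemma SimpleGraph.Iso.percStep_map (e : G ≃g G') (φ : W → ℝ) (A : Finset V) :
    (percStep G (φ ∘ e) A).map e.toEquiv.toEmbedding =
      percStep G' φ (A.map e.toEquiv.toEmbedding) := by
  ext w
  obtain ⟨v, rfl⟩ := e.surjective w
  have hcard : ((A.map e.toEquiv.toEmbedding).filter fun u => G'.Adj (e v) u).card =
      (A.filter fun u => G.Adj v u).card := by
    rw [Finset.filter_map, Finset.card_map]
    congr 1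
    ext u
    simp [e.map_adj_iff]
  simp [percStep, hcard, -Finset.mem_map_equiv, e.injective.eq_iff]

lemma Contagious.map_iso (e : G ≃g G') {φ : W → ℝ} {A : Finset V}
    (hA : Contagious G (φ ∘ e) A) : Contagious G' φ (A.map e.toEquiv.toEmbedding) := by
  obtain ⟨j, hj⟩ := hA
  refine ⟨j, ?_⟩
  have hsemi : Function.Semiconj (Finset.map e.toEquiv.toEmbedding) (percStep G (φ ∘ e))
      (percStep G' φ) := e.percStep_map φ
  rw [← hsemi.iterate_right j A, hj]
  exact Finset.map_univ_of_surjective e.surjective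

lemma SimpleGraph.Iso.minContagious_le (e : G ≃g G') (ρ : ℝ) :
    minContagious G' ρ ≤ minContagious G ρ := by
  have hφ : (fun w => ρ * (G'.degree w : ℝ)) ∘ e = fun v => ρ * (G.degree v : ℝ) := by
    ext v
    simp
  refine le_csInf ⟨_, Finset.univ, rfl, 0, rfl⟩ fun _ ⟨A, hA, hc⟩ => ?_
  exact Nat.sInf_le ⟨_, by rw [Finset.card_map, hA], (hφ ▸ hc).map_iso e⟩

lemma SimpleGraph.Iso.minContagious_eq (e : G ≃g G') (ρ : ℝ) :
    minContagious G' ρ = minContagious G ρ :=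
  (e.minContagious_le ρ).antisymm (e.symm.minContagious_le ρ)

end Iso

section HubJoin

variable {α : Type*}

def hubJoin (H : SimpleGraph α) (a : α) (ι : Type*) : SimpleGraph (Option (ι × α)) where
  Adj
    | some (i, x), some (j, y) => i = j ∧ H.Adj x y
    | none, some (_, x) | some (_, x), none => x = a
    | none, none => False
  symm := ⟨by
    rintro (_ | ⟨i, x⟩) (_ | ⟨j, y⟩) h
    all_goals first | exact h | exact ⟨h.1.symm, h.2.symm⟩⟩
  loopless := ⟨by
    rintro (_ | ⟨i, x⟩) h
    exacts [h, H.loopless.irrefl x h.2]⟩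

variable {ι : Type*} {H : SimpleGraph α} {a : α}

@[simp] lemma hubJoin_adj_some_some {i j : ι} {x y : α} :
    (hubJoin H a ι).Adj (some (i, x)) (some (j, y)) ↔ i = j ∧ H.Adj x y := Iff.rfl

@[simp] lemma hubJoin_adj_none_some {i : ι} {x : α} :
    (hubJoin H a ι).Adj none (some (i, x)) ↔ x = a := Iff.rfl

@[simp] lemma hubJoin_adj_some_none {i : ι} {x : α} :
    (hubJoin H a ι).Adj (some (i, x)) none ↔ x = a := Iff.rfl

lemma hubJoin_connected (hH : H.Connected) : (hubJoin H a ι).Connected := by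
  refine SimpleGraph.connected_iff_exists_forall_reachable _ |>.2 ⟨none, ?_⟩
  rintro (_ | ⟨i, x⟩)
  · rfl
  · let f : H →g hubJoin H a ι := ⟨fun y => some (i, y), fun h => ⟨rfl, h⟩⟩
    have hxa : (hubJoin H a ι).Reachable (some (i, a)) (some (i, x)) := (hH a x).map f
    exact (SimpleGraph.Adj.reachable (by simp)).trans hxa

end HubJoin

section Gadget

variable {m : ℕ}

/-- `none` is the apex `u`, `some (.inl b)` runs over the clique `B` and `some (.inr a)` over
the independent set `A`. -/
abbrev Gadget (m : ℕ) := Option (Fin m ⊕ Fin m)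

def gadget (m : ℕ) : SimpleGraph (Gadget m) where
  Adj
    | some (.inl b), some (.inl b') => b ≠ b'
    | some (.inl _), some (.inr _) | some (.inr _), some (.inl _) => True
    | some (.inr _), none | none, some (.inr _) => True
    | _, _ => False
  symm := ⟨by
    rintro (_ | _ | _) (_ | _ | _) h
    all_goals first | trivial | exact Ne.symm h⟩
  loopless := ⟨by
    rintro (_ | _ | _) h
    all_goals first | exact h | exact h rfl⟩

lemma gadget_connected : (gadget m).Connected := by
  refine SimpleGraph.connected_iff_exists_forall_reachable _ |>.2 ⟨none, ?_⟩
  have hA : ∀ a, (gadget m).Reachable none (some (.inr a)) := fun a =>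
    SimpleGraph.Adj.reachable trivial
  rintro (_ | b | a)
  · rfl
  · exact (hA b).trans (SimpleGraph.Adj.reachable trivial)
  · exact hA a

end Gadget

lemma SimpleGraph.card_le_degree_of_embedding {ι : Type*} [Fintype ι] {G : SimpleGraph V}
    {v : V} [Fintype (G.neighborSet v)] (f : ι ↪ V) (hadj : ∀ j, G.Adj v (f j)) :
    Fintype.card ι ≤ G.degree v := by
  rw [← G.card_neighborSet_eq_degree]
  exact Fintype.card_le_of_embedding
    ⟨fun j => ⟨f j, hadj j⟩, fun _ _ h => f.injective (congrArg Subtype.val h)⟩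

lemma succ_le_degree_hubJoin_gadget {m : ℕ} {ι : Type*} [Fintype ι] (hm : 2 ≤ m) (i : ι)
    (x : Gadget m) : m + 1 ≤ (hubJoin (gadget m) none ι).degree (some (i, x)) := by
  set G := hubJoin (gadget m) none ι
  let inCopy : Fin m ⊕ Fin m ↪ Option (ι × Gadget m) :=
    Function.Embedding.some.trans ((Function.Embedding.sectR i _).trans Function.Embedding.some)
  obtain ⟨f, w, hw, hf, hwadj⟩ : ∃ (f : Fin m ↪ Option (ι × Gadget m))
      (w : Option (ι × Gadget m)) (_ : w ∉ Set.range f),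
      (∀ j, G.Adj (some (i, x)) (f j)) ∧ G.Adj (some (i, x)) w := by
    rcases x with _ | b | a
    · exact ⟨Function.Embedding.inr.trans inCopy, none, by simp [inCopy],
        fun _ => by simp [G, inCopy, gadget], by simp [G]⟩
    · have : Nontrivial (Fin m) := Fin.nontrivial_iff_two_le.2 hm
      obtain ⟨b', hb'⟩ := exists_ne b
      exact ⟨Function.Embedding.inr.trans inCopy, some (i, some (.inl b')), by simp [inCopy],
        fun _ => by simp [G, inCopy, gadget], by simp [G, gadget, hb'.symm]⟩
    · exact ⟨Function.Embedding.inl.trans inCopy, some (i, none), by simp [inCopy],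
        fun _ => by simp [G, inCopy, gadget], by simp [G, gadget]⟩
  simpa using G.card_le_degree_of_embedding (f.optionElim w hw) (Option.forall.2 ⟨hwadj, hf⟩)

section Copies

variable {m : ℕ} {ι : Type*} [Fintype ι] {φ : Option (ι × Gadget m) → ℝ}
  {S : Finset (Option (ι × Gadget m))}

lemma Contagious.exists_ne_mem_copy_of_clique (hφ : ∀ i x, 1 < φ (some (i, x)))
    (hS : Contagious (hubJoin (gadget m) none ι) φ S) (i : ι) (b₀ : Fin m) :
    ∃ x ≠ some (.inl b₀), some (i, x) ∈ S := by
  let U : Finset (Option (ι × Gadget m)) :=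
    univ.filter fun v => ∃ x ≠ some (.inl b₀), v = some (i, x)
  have hU : ∀ v ∈ U, ∃ x ≠ some (.inl b₀), v = some (i, x) := fun v hv =>
    (Finset.mem_filter.1 hv).2
  have himm : IsImmune (hubJoin (gadget m) none ι) φ U := by
    refine isImmune_of_outside_neighbor_unique (fun v hv => ?_) fun v hv => ?_
    · obtain ⟨x, -, rfl⟩ := hU v hv
      exact hφ i x
    obtain ⟨x, hx, rfl⟩ := hU v hv
    refine ⟨if x = none then none else some (i, some (.inl b₀)), ?_⟩
    rintro (_ | ⟨j, z⟩) hadj hu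
    · simp [(hubJoin_adj_some_none).1 hadj]
    · obtain ⟨rfl, hxz⟩ := hadj
      obtain rfl : z = some (.inl b₀) := by
        by_contra h
        exact hu (Finset.mem_filter.2 ⟨Finset.mem_univ _, z, h, rfl⟩)
      have : x ≠ none := by rintro rfl; exact hxz
      simp [this]
  obtain ⟨v, hvU, hvS⟩ := hS.exists_mem_of_isImmune himm ⟨some (i, none), by simp [U]⟩
  obtain ⟨x, hx, rfl⟩ := hU v hvU
  exact ⟨x, hx, hvS⟩

lemma Contagious.exists_ne_mem_copy_of_not_clique (hm : 1 ≤ m)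
    (hφ : ∀ i x, 1 < φ (some (i, x))) (hS : Contagious (hubJoin (gadget m) none ι) φ S)
    (i : ι) {x₀ : Gadget m} (hx₀ : ∀ b, x₀ ≠ some (.inl b)) :
    ∃ x ≠ x₀, some (i, x) ∈ S := by
  let U : Finset (Option (ι × Gadget m)) :=
    univ.filter fun v => ∃ y, some y ≠ x₀ ∧ v = some (i, some y)
  have hU : ∀ v ∈ U, ∃ y, some y ≠ x₀ ∧ v = some (i, some y) := fun v hv =>
    (Finset.mem_filter.1 hv).2
  have himm : IsImmune (hubJoin (gadget m) none ι) φ U := by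
    refine isImmune_of_outside_neighbor_unique (fun v hv => ?_) fun v hv => ?_
    · obtain ⟨y, -, rfl⟩ := hU v hv
      exact hφ i _
    obtain ⟨y, hy, rfl⟩ := hU v hv
    refine ⟨if y.isLeft then some (i, x₀) else some (i, none), ?_⟩
    rintro (_ | ⟨j, z⟩) hadj hu
    · exact absurd hadj (by simp)
    obtain ⟨rfl, hyz⟩ := hadj
    have hz : z = none ∨ z = x₀ := by
      by_contra! h
      obtain ⟨z, rfl⟩ := Option.ne_none_iff_exists'.1 h.1
      exact hu (Finset.mem_filter.2 ⟨Finset.mem_univ _, z, h.2, rfl⟩)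
    rcases y with b | a <;> rcases hz with hz | hz <;> subst z
    · exact absurd hyz id
    · simp
    · simp
    · rcases x₀ with _ | b₀ | a₀
      · simp
      · exact absurd rfl (hx₀ b₀)
      · exact absurd hyz id
  obtain ⟨v, hvU, hvS⟩ := hS.exists_mem_of_isImmune himm
    ⟨some (i, some (.inl ⟨0, hm⟩)), by simpa [U] using (hx₀ _).symm⟩
  obtain ⟨y, hy, rfl⟩ := hU v hvU
  exact ⟨some y, hy, hvS⟩

lemma Contagious.exists_ne_mem_copy (hm : 1 ≤ m) (hφ : ∀ i x, 1 < φ (some (i, x)))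
    (hS : Contagious (hubJoin (gadget m) none ι) φ S) (i : ι) (x₀ : Gadget m) :
    ∃ x ≠ x₀, some (i, x) ∈ S := by
  by_cases hB : ∃ b₀, x₀ = some (.inl b₀)
  · obtain ⟨b₀, rfl⟩ := hB
    exact hS.exists_ne_mem_copy_of_clique hφ i b₀
  · exact hS.exists_ne_mem_copy_of_not_clique hm hφ i fun b h => hB ⟨b, h⟩

lemma Contagious.two_le_card_copy (hm : 1 ≤ m) (hφ : ∀ i x, 1 < φ (some (i, x)))
    (hS : Contagious (hubJoin (gadget m) none ι) φ S) (i : ι) :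
    2 ≤ (S.filter fun v => v.map Prod.fst = some i).card := by
  obtain ⟨x₁, -, hx₁⟩ := hS.exists_ne_mem_copy hm hφ i none
  obtain ⟨x₂, hx₂, hx₂S⟩ := hS.exists_ne_mem_copy hm hφ i x₁
  exact Finset.one_lt_card.2 ⟨some (i, x₁), by simp [hx₁], some (i, x₂), by simp [hx₂S],
    by simp [hx₂.symm]⟩

lemma Contagious.two_mul_card_le (hm : 1 ≤ m) (hφ : ∀ i x, 1 < φ (some (i, x)))
    (hS : Contagious (hubJoin (gadget m) none ι) φ S) : 2 * Fintype.card ι ≤ S.card := by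
  rw [Finset.card_eq_sum_card_fiberwise (f := Option.map Prod.fst) (t := univ)
    fun _ _ => Finset.mem_univ _, Fintype.sum_option]
  calc 2 * Fintype.card ι = ∑ _i : ι, 2 := by simp [mul_comm]
    _ ≤ ∑ i : ι, (S.filter fun v => v.map Prod.fst = some i).card :=
      Finset.sum_le_sum fun i _ => hS.two_le_card_copy hm hφ i
    _ ≤ _ := Nat.le_add_left _ _

end Copies

lemma one_add_quarter_mul_lt_two_mul {ρ δ k : ℝ} (hρ : ρ < 1 / 3) (hk₀ : 0 ≤ k)
    (hk : 1 ≤ δ * k) : (1 + δ / 4) * ((2 - δ) * k + ρ) < 2 * k := by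
  have hδ : 0 < δ := pos_of_mul_pos_left (one_pos.trans_le hk) hk₀
  nlinarith [mul_le_mul_of_nonneg_left hk hδ.le]

/-- Proposition 2: for every `ρ ∈ (0, 1/3)` with `1/ρ - ⌊1/ρ⌋ > 1/2`
there exists `ε > 0` such that for every `N₀` there is a connected graph `G` of order
`n ≥ N₀` with `h_ρ(G) > (1 + ε)ρn`. -/
theorem exists_arbitrarily_large_graph_min_contagious_gt (ρ : ℝ) (h₀ : 0 < ρ)
    (h₁ : ρ < 1 / 3) (hfrac : 1 / 2 < 1 / ρ - (⌊1 / ρ⌋₊ : ℝ)) :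
    ∃ ε : ℝ, 0 < ε ∧ ∀ N₀ : ℕ, ∃ (n : ℕ) (G : SimpleGraph (Fin n)),
      G.Connected ∧ N₀ ≤ n ∧ (1 + ε) * ρ * (n : ℝ) < (minContagious G ρ : ℝ) := by
  set m := ⌊1 / ρ⌋₊
  have hm : 2 ≤ m := Nat.le_floor <| by rw [le_div_iff₀ h₀]; norm_num; linarith
  have hdeg : 1 < ρ * (m + 1) := by
    have := Nat.lt_floor_add_one (1 / ρ); rwa [div_lt_iff₀ h₀, mul_comm] at this
  set δ := 2 - ρ * (2 * m + 1)
  have hδ : 0 < δ := by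
    have : (m + 1 / 2 : ℝ) < 1 / ρ := by linarith
    rw [lt_div_iff₀ h₀] at this; linarith
  refine ⟨δ / 4, by positivity, fun N₀ => ?_⟩
  set k := max N₀ ⌈δ⁻¹⌉₊
  have hk : 1 ≤ δ * k := by
    rw [← div_le_iff₀' hδ, one_div]
    exact (Nat.le_ceil _).trans (by exact_mod_cast le_max_right _ _)
  let G := hubJoin (gadget m) none (Fin k)
  have hcard : Fintype.card (Option (Fin k × Gadget m)) = k * (2 * m + 1) + 1 := by
    simp only [Fintype.card_option, Fintype.card_prod, Fintype.card_fin, Fintype.card_sum]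
    ring
  refine ⟨_, G.overFin rfl,
    (G.overFinIso rfl).connected_iff.1 (hubJoin_connected gadget_connected), ?_, ?_⟩
  · rw [hcard]
    exact (le_max_left _ _).trans (Nat.le_succ_of_le (Nat.le_mul_of_pos_right k (by omega)))
  · have h2k : 2 * k ≤ minContagious G ρ := le_minContagious fun S hS => by
      simpa using hS.two_mul_card_le (by omega) fun i x => hdeg.trans_le <| by
        gcongr; exact_mod_cast succ_le_degree_hubJoin_gadget hm i x
    rw [(G.overFinIso rfl).minContagious_eq, hcard]
    calc _ = (1 + δ / 4) * ((2 - δ) * k + ρ) := by push_cast; ring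
      _ < 2 * k := one_add_quarter_mul_lt_two_mul h₁ k.cast_nonneg hk
      _ ≤ _ := by exact_mod_cast h2k
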